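/- arXiv:math/0507603 — 2 statements merged into one kernel-verified Lean document; each statement's English description precedes it below -/
import Mathlib

section
/- Let H be an infinite-dimensional Hilbert space over ℝ or ℂ, with unit sphere S_H carrying the kernel k(x,y) := ‖x−y‖. Then the rendezvous and average intervals of S_H both reduce to the single point √2: M(S_H) = M̄(S_H) = q̲(S_H,S_H) = q(S_H,S_H) = √2; that is, 𝓐(H) = 𝓡(H) = {√2}. -/
open MeasureTheory ENNReal
open scoped BigOperators

namespace Rendezvous

variable {X : Type*}

/-- The `n`-th Chebyshev constant `Mₙ(H,L)` of `L` with respect to `H` for the kernel `k`. -/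
noncomputable def chebMn (k : X → X → ℝ≥0∞) (n : ℕ) (H L : Set X) : ℝ≥0∞ :=
  ⨆ w : Fin n → H, ⨅ x : L, (∑ j, k (x : X) ((w j : X))) / (n : ℝ≥0∞)

/-- The `n`-th dual Chebyshev constant `M̄ₙ(H,L)`. -/
noncomputable def chebMnDual (k : X → X → ℝ≥0∞) (n : ℕ) (H L : Set X) : ℝ≥0∞ :=
  ⨅ w : Fin n → H, ⨆ x : L, (∑ j, k (x : X) ((w j : X))) / (n : ℝ≥0∞)

/-- The Chebyshev constant `M(H,L) = sup_{n ≥ 1} Mₙ(H,L)`. -/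
noncomputable def chebM (k : X → X → ℝ≥0∞) (H L : Set X) : ℝ≥0∞ :=
  ⨆ n : ℕ, ⨆ (_ : 1 ≤ n), chebMn k n H L

/-- The dual Chebyshev constant `M̄(H,L) = inf_{n ≥ 1} M̄ₙ(H,L)`. -/
noncomputable def chebMDual (k : X → X → ℝ≥0∞) (H L : Set X) : ℝ≥0∞ :=
  ⨅ n : ℕ, ⨅ (_ : 1 ≤ n), chebMnDual k n H L

/-- The potential `U^μ(x) = ∫ k(x,y) dμ(y)` of a measure. -/
noncomputable def pot [MeasurableSpace X] (k : X → X → ℝ≥0∞) (μ : Measure X) (x : X) : ℝ≥0∞ :=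
  ∫⁻ y, k x y ∂μ

/-- `μ` is a tight (inner regular w.r.t. compact sets) Borel probability measure
concentrated on `H`. -/
def TightProbOn [TopologicalSpace X] [MeasurableSpace X] (μ : Measure X) (H : Set X) : Prop :=
  IsProbabilityMeasure μ ∧ μ.InnerRegular ∧ μ Hᶜ = 0

/-- The quasi-uniform energy `q(H,L) = inf_{μ ∈ M₁(H)} sup_{x ∈ L} U^μ(x)`. -/
noncomputable def qUp [TopologicalSpace X] [MeasurableSpace X] (k : X → X → ℝ≥0∞)
    (H L : Set X) : ℝ≥0∞ :=
  ⨅ (μ : Measure X) (_ : TightProbOn μ H), ⨆ x : L, pot k μ (x : X)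

/-- The dual quasi-uniform energy `q̲(H,L) = sup_{μ ∈ M₁(H)} inf_{x ∈ L} U^μ(x)`. -/
noncomputable def qLow [TopologicalSpace X] [MeasurableSpace X] (k : X → X → ℝ≥0∞)
    (H L : Set X) : ℝ≥0∞ :=
  ⨆ (μ : Measure X) (_ : TightProbOn μ H), ⨅ x : L, pot k μ (x : X)

end Rendezvous

open Rendezvous

/-!
Empirical measures of `n` points of `H` are tight probability measures whose potentials are the
averages in the Chebyshev constants, so `M ≤ q̲` and `q ≤ M̄`. Integrating the potential of `μ`
against an empirical measure and exchanging the finite sum with the integral gives `q̲ ≤ M̄` and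
`M ≤ q` for a symmetric kernel.

On the unit sphere of an infinite-dimensional inner product space take an orthonormal `n`-tuple
`e`. For every unit `x`, `|‖x - eⱼ‖ - √2| ≤ √2 ‖⟪x, eⱼ⟫‖`, and `∑ⱼ ‖⟪x, eⱼ⟫‖ ≤ √n` by
Cauchy–Schwarz and Bessel, so the average distance from `x` to the `eⱼ` is within `√2 / √n` of
`√2`. Hence `√2 ≤ M` and `M̄ ≤ √2`, which closes the chains `√2 ≤ M ≤ q̲ ≤ M̄ ≤ √2` and
`√2 ≤ M ≤ q ≤ M̄ ≤ √2`.
-/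

instance MeasureTheory.Measure.innerRegular_dirac {X : Type*} [TopologicalSpace X]
    [MeasurableSpace X] (a : X) : (Measure.dirac a).InnerRegular := by
  refine ⟨fun U hU r hr => ⟨{a}, ?_, isCompact_singleton, ?_⟩⟩
  · by_contra ha
    rw [Measure.dirac_apply' a hU, Set.indicator_of_notMem (by simpa using ha)] at hr
    exact ENNReal.not_lt_zero hr
  · rw [Measure.dirac_apply_of_mem (Set.mem_singleton a)]
    exact hr.trans_le prob_le_one

namespace Rendezvous

section Empirical

variable {X : Type*} [MeasurableSpace X]

noncomputable def empiricalMeasure {n : ℕ} (w : Fin n → X) : Measure X :=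
  (n : ℝ≥0∞)⁻¹ • ∑ j, Measure.dirac (w j)

variable [MeasurableSingletonClass X] {n : ℕ} (w : Fin n → X)

theorem lintegral_empiricalMeasure (f : X → ℝ≥0∞) :
    ∫⁻ x, f x ∂empiricalMeasure w = (∑ j, f (w j)) / n := by
  simp only [empiricalMeasure, lintegral_smul_measure, lintegral_finsetSum_measure,
    lintegral_dirac, smul_eq_mul, ENNReal.div_eq_inv_mul]

theorem pot_empiricalMeasure (k : X → X → ℝ≥0∞) (x : X) :
    pot k (empiricalMeasure w) x = (∑ j, k x (w j)) / n :=
  lintegral_empiricalMeasure w (k x)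

theorem tightProbOn_empiricalMeasure [TopologicalSpace X] {H : Set X} (hn : n ≠ 0)
    (hw : ∀ j, w j ∈ H) :
    TightProbOn (empiricalMeasure w) H := by
  refine ⟨⟨?_⟩, inferInstanceAs (Measure.InnerRegular (_ • _)), ?_⟩
  · simp only [empiricalMeasure, Measure.smul_apply, Measure.coe_finsetSum, Finset.sum_apply,
      measure_univ, Finset.sum_const, Finset.card_univ, Fintype.card_fin, nsmul_eq_mul, mul_one,
      smul_eq_mul]
    exact ENNReal.inv_mul_cancel (by exact_mod_cast hn) (ENNReal.natCast_ne_top n)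
  · simp [empiricalMeasure, Measure.dirac_apply, hw]

-- Tonelli for a finite sum: joint measurability of `k` is not available on non-separable spaces.
theorem lintegral_pot_empiricalMeasure {k : X → X → ℝ≥0∞} (hk : ∀ x y, k x y = k y x)
    (hkm : ∀ x, Measurable (k x)) (μ : Measure X) :
    ∫⁻ y, pot k (empiricalMeasure w) y ∂μ = ∫⁻ x, pot k μ x ∂empiricalMeasure w := by
  have hkm' : ∀ x, Measurable fun y => k y x := fun x => by simp_rw [hk _ x]; exact hkm x
  simp only [pot_empiricalMeasure]
  simp only [lintegral_empiricalMeasure, pot, ENNReal.div_eq_inv_mul]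
  rw [lintegral_const_mul _ (Finset.measurable_sum _ fun j _ => hkm' (w j)),
    lintegral_finsetSum _ fun j _ => hkm' (w j)]
  simp only [hk]

end Empirical

section Concentrated

variable {X : Type*} [TopologicalSpace X] [MeasurableSpace X] {μ : Measure X} {H : Set X}

theorem TightProbOn.iInf_le_lintegral (hμ : TightProbOn μ H) (f : X → ℝ≥0∞) :
    ⨅ x : H, f x ≤ ∫⁻ x, f x ∂μ := by
  have := hμ.1
  calc ⨅ x : H, f x = ∫⁻ _, ⨅ x : H, f x ∂μ := by simp
    _ ≤ ∫⁻ x, f x ∂μ := lintegral_mono_ae <| (measure_eq_zero_iff_ae_notMem.mp hμ.2.2).mono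
        fun x hx => iInf_le_of_le ⟨x, by simpa using hx⟩ le_rfl

theorem TightProbOn.lintegral_le_iSup (hμ : TightProbOn μ H) (f : X → ℝ≥0∞) :
    ∫⁻ x, f x ∂μ ≤ ⨆ x : H, f x := by
  have := hμ.1
  calc ∫⁻ x, f x ∂μ ≤ ∫⁻ _, ⨆ x : H, f x ∂μ := lintegral_mono_ae <|
        (measure_eq_zero_iff_ae_notMem.mp hμ.2.2).mono
        fun x hx => le_iSup_of_le ⟨x, by simpa using hx⟩ le_rfl
    _ = ⨆ x : H, f x := by simp

end Concentrated

variable {X : Type*} [TopologicalSpace X] [MeasurableSpace X] [MeasurableSingletonClass X]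

theorem chebM_le_qLow (k : X → X → ℝ≥0∞) (H L : Set X) : chebM k H L ≤ qLow k H L := by
  refine iSup₂_le fun n hn => iSup_le fun w => ?_
  have hμ := tightProbOn_empiricalMeasure (fun j => (w j : X)) (by omega) fun j => (w j).2
  simp only [← pot_empiricalMeasure]
  exact le_iSup₂ (f := fun μ (_ : TightProbOn μ H) => ⨅ x : L, pot k μ x) _ hμ

theorem qUp_le_chebMDual (k : X → X → ℝ≥0∞) (H L : Set X) : qUp k H L ≤ chebMDual k H L := by
  refine le_iInf₂ fun n hn => le_iInf fun w => ?_
  have hμ := tightProbOn_empiricalMeasure (fun j => (w j : X)) (by omega) fun j => (w j).2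
  simp only [← pot_empiricalMeasure]
  exact iInf₂_le (f := fun μ (_ : TightProbOn μ H) => ⨆ x : L, pot k μ x) _ hμ

variable {k : X → X → ℝ≥0∞}

theorem chebM_le_qUp (hk : ∀ x y, k x y = k y x) (hkm : ∀ x, Measurable (k x)) (H L : Set X) :
    chebM k L H ≤ qUp k H L := by
  refine iSup₂_le fun n hn => iSup_le fun w => le_iInf₂ fun μ hμ => ?_
  have hν := tightProbOn_empiricalMeasure (fun j => (w j : X)) (by omega) fun j => (w j).2
  simp only [← pot_empiricalMeasure]
  calc ⨅ y : H, pot k (empiricalMeasure fun j => (w j : X)) y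
      ≤ ∫⁻ y, pot k (empiricalMeasure fun j => (w j : X)) y ∂μ := hμ.iInf_le_lintegral _
    _ = ∫⁻ x, pot k μ x ∂empiricalMeasure fun j => (w j : X) :=
      lintegral_pot_empiricalMeasure _ hk hkm μ
    _ ≤ ⨆ x : L, pot k μ x := hν.lintegral_le_iSup _

theorem qLow_le_chebMDual (hk : ∀ x y, k x y = k y x) (hkm : ∀ x, Measurable (k x))
    (H L : Set X) : qLow k H L ≤ chebMDual k L H := by
  refine iSup₂_le fun μ hμ => le_iInf₂ fun n hn => le_iInf fun w => ?_
  have hν := tightProbOn_empiricalMeasure (fun j => (w j : X)) (by omega) fun j => (w j).2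
  simp only [← pot_empiricalMeasure]
  calc ⨅ x : L, pot k μ x ≤ ∫⁻ x, pot k μ x ∂empiricalMeasure fun j => (w j : X) :=
      hν.iInf_le_lintegral _
    _ = ∫⁻ y, pot k (empiricalMeasure fun j => (w j : X)) y ∂μ :=
      (lintegral_pot_empiricalMeasure _ hk hkm μ).symm
    _ ≤ ⨆ y : H, pot k (empiricalMeasure fun j => (w j : X)) y := hμ.lintegral_le_iSup _

end Rendezvous

theorem sum_edist_div_natCast_eq_ofReal {X : Type*} [PseudoMetricSpace X] {n : ℕ} (hn : n ≠ 0)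
    (x : X) (w : Fin n → X) :
    (∑ j, edist x (w j)) / n = ENNReal.ofReal ((∑ j, dist x (w j)) / n) := by
  rw [ENNReal.ofReal_div_of_pos (by positivity), ENNReal.ofReal_natCast,
    ENNReal.ofReal_sum_of_nonneg fun j _ => dist_nonneg]
  simp only [edist_dist]

section InnerProductSpace

open Filter Topology Metric InnerProductSpace

variable {𝕜 E : Type*} [RCLike 𝕜] [NormedAddCommGroup E] [InnerProductSpace 𝕜 E]

theorem exists_orthonormal_fin (hinf : ¬ FiniteDimensional 𝕜 E) (n : ℕ) :
    ∃ e : Fin n → E, Orthonormal 𝕜 e := by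
  have hn : (n : Cardinal) ≤ Module.rank 𝕜 E :=
    Cardinal.natCast_lt_aleph0.le.trans (not_lt.mp (mt Module.rank_lt_aleph0_iff.mp hinf))
  obtain ⟨f, hf⟩ := exists_linearIndependent_of_le_rank hn
  exact ⟨gramSchmidtNormed 𝕜 f, gramSchmidtNormed_orthonormal hf⟩

theorem abs_norm_sub_sub_sqrt_two_le {x y : E} (hx : ‖x‖ = 1) (hy : ‖y‖ = 1) :
    |‖x - y‖ - √2| ≤ √2 * ‖(inner 𝕜 x y : 𝕜)‖ := by
  have hsq : ‖x - y‖ ^ 2 = 2 - 2 * RCLike.re (inner 𝕜 x y : 𝕜) := by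
    rw [norm_sub_sq (𝕜 := 𝕜), hx, hy]; ring
  have hs : (0 : ℝ) < √2 := by positivity
  have hfactor : |‖x - y‖ - √2| * (‖x - y‖ + √2) = 2 * |RCLike.re (inner 𝕜 x y : 𝕜)| := by
    rw [← abs_of_nonneg (by positivity : 0 ≤ ‖x - y‖ + √2), ← abs_mul,
      show (‖x - y‖ - √2) * (‖x - y‖ + √2) = ‖x - y‖ ^ 2 - √2 ^ 2 by ring, hsq,
      Real.sq_sqrt zero_le_two, sub_sub_cancel_left, abs_neg, abs_mul, abs_two]
  refine le_of_mul_le_mul_right ?_ hs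
  calc |‖x - y‖ - √2| * √2 ≤ |‖x - y‖ - √2| * (‖x - y‖ + √2) :=
        mul_le_mul_of_nonneg_left (le_add_of_nonneg_left (norm_nonneg _)) (abs_nonneg _)
    _ = 2 * |RCLike.re (inner 𝕜 x y : 𝕜)| := hfactor
    _ ≤ 2 * ‖(inner 𝕜 x y : 𝕜)‖ := by gcongr; exact RCLike.abs_re_le_norm _
    _ = √2 * ‖(inner 𝕜 x y : 𝕜)‖ * √2 := by rw [mul_right_comm, Real.mul_self_sqrt zero_le_two]

theorem Orthonormal.sum_norm_inner_le {ι : Type*} [Fintype ι] {e : ι → E} (he : Orthonormal 𝕜 e)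
    (x : E) : ∑ i, ‖(inner 𝕜 (e i) x : 𝕜)‖ ≤ √(Fintype.card ι) * ‖x‖ := by
  rw [← Real.sqrt_sq (norm_nonneg x), ← Real.sqrt_mul (Nat.cast_nonneg _)]
  refine Real.le_sqrt_of_sq_le ((sq_sum_le_card_mul_sum_sq ..).trans ?_)
  simpa using mul_le_mul_of_nonneg_left (he.sum_inner_products_le x) (Nat.cast_nonneg _)

theorem Orthonormal.abs_sum_norm_sub_sub_le {ι : Type*} [Fintype ι] {e : ι → E}
    (he : Orthonormal 𝕜 e) {x : E} (hx : ‖x‖ = 1) :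
    |∑ i, ‖x - e i‖ - Fintype.card ι * √2| ≤ √2 * √(Fintype.card ι) := by
  have hsum : ∑ i, ‖x - e i‖ - Fintype.card ι * √2 = ∑ i, (‖x - e i‖ - √2) := by
    simp [Finset.sum_sub_distrib]
  calc |∑ i, ‖x - e i‖ - Fintype.card ι * √2| ≤ ∑ i, |‖x - e i‖ - √2| := by
        rw [hsum]; exact Finset.abs_sum_le_sum_abs _ _
    _ ≤ ∑ i, √2 * ‖(inner 𝕜 (e i) x : 𝕜)‖ := Finset.sum_le_sum fun i _ => by
        rw [norm_inner_symm]; exact abs_norm_sub_sub_sqrt_two_le hx (he.1 i)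
    _ ≤ √2 * √(Fintype.card ι) := by
        rw [← Finset.mul_sum]
        simpa [hx] using mul_le_mul_of_nonneg_left (he.sum_norm_inner_le x) (Real.sqrt_nonneg 2)

theorem Orthonormal.abs_sum_norm_sub_div_sub_le {n : ℕ} (hn : n ≠ 0) {e : Fin n → E}
    (he : Orthonormal 𝕜 e) {x : E} (hx : ‖x‖ = 1) :
    |(∑ j, ‖x - e j‖) / n - √2| ≤ √2 / √n := by
  have hpos : (0 : ℝ) < n := by positivity
  have hsum := he.abs_sum_norm_sub_sub_le hx
  rw [Fintype.card_fin] at hsum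
  calc |(∑ j, ‖x - e j‖) / n - √2| = |∑ j, ‖x - e j‖ - n * √2| / n := by
        rw [← abs_of_pos hpos, ← abs_div, abs_of_pos hpos, sub_div,
          mul_div_cancel_left₀ _ hpos.ne']
    _ ≤ √2 * √n / n := by gcongr
    _ = √2 / √n := by
        have hsqrt : (0 : ℝ) < √n := Real.sqrt_pos.2 hpos
        field_simp
        rw [Real.sq_sqrt hpos.le]

variable (𝕜) in
theorem ofReal_sqrt_two_sub_le_chebMn_sphere (hinf : ¬ FiniteDimensional 𝕜 E) {n : ℕ}
    (hn : n ≠ 0) :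
    ENNReal.ofReal (√2 - √2 / √n)
      ≤ chebMn (fun x y : E => edist x y) n (sphere (0 : E) 1) (sphere (0 : E) 1) := by
  obtain ⟨e, he⟩ := exists_orthonormal_fin hinf n
  refine le_iSup_of_le (fun j => ⟨e j, by simpa using he.1 j⟩) (le_iInf fun x => ?_)
  have hx := he.abs_sum_norm_sub_div_sub_le hn (mem_sphere_zero_iff_norm.1 x.2)
  rw [sum_edist_div_natCast_eq_ofReal hn]
  simp only [dist_eq_norm]
  exact ENNReal.ofReal_le_ofReal (by linarith [(abs_le.1 hx).1])

variable (𝕜) in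
theorem chebMnDual_sphere_le_ofReal_sqrt_two_add (hinf : ¬ FiniteDimensional 𝕜 E) {n : ℕ}
    (hn : n ≠ 0) :
    chebMnDual (fun x y : E => edist x y) n (sphere (0 : E) 1) (sphere (0 : E) 1)
      ≤ ENNReal.ofReal (√2 + √2 / √n) := by
  obtain ⟨e, he⟩ := exists_orthonormal_fin hinf n
  refine iInf_le_of_le (fun j => ⟨e j, by simpa using he.1 j⟩) (iSup_le fun x => ?_)
  have hx := he.abs_sum_norm_sub_div_sub_le hn (mem_sphere_zero_iff_norm.1 x.2)
  rw [sum_edist_div_natCast_eq_ofReal hn]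
  simp only [dist_eq_norm]
  exact ENNReal.ofReal_le_ofReal (by linarith [(abs_le.1 hx).2])

theorem tendsto_div_sqrt_natCast_atTop (a : ℝ) : Tendsto (fun n : ℕ => a / √n) atTop (𝓝 0) :=
  tendsto_const_nhds.div_atTop (Real.tendsto_sqrt_atTop.comp tendsto_natCast_atTop_atTop)

variable (𝕜) in
theorem ofReal_sqrt_two_le_chebM_sphere (hinf : ¬ FiniteDimensional 𝕜 E) :
    ENNReal.ofReal √2
      ≤ chebM (fun x y : E => edist x y) (sphere (0 : E) 1) (sphere (0 : E) 1) := by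
  refine le_of_tendsto (ENNReal.tendsto_ofReal ?_) (eventually_atTop.2 ⟨1, fun n hn =>
    (ofReal_sqrt_two_sub_le_chebMn_sphere 𝕜 hinf (n := n) (by omega)).trans
      (le_iSup₂_of_le n hn le_rfl)⟩)
  simpa using tendsto_const_nhds.sub (tendsto_div_sqrt_natCast_atTop √2)

variable (𝕜) in
theorem chebMDual_sphere_le_ofReal_sqrt_two (hinf : ¬ FiniteDimensional 𝕜 E) :
    chebMDual (fun x y : E => edist x y) (sphere (0 : E) 1) (sphere (0 : E) 1)
      ≤ ENNReal.ofReal √2 := by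
  refine ge_of_tendsto (ENNReal.tendsto_ofReal ?_) (eventually_atTop.2 ⟨1, fun n hn =>
    (iInf₂_le_of_le n hn le_rfl).trans
      (chebMnDual_sphere_le_ofReal_sqrt_two_add 𝕜 hinf (n := n) (by omega))⟩)
  simpa using tendsto_const_nhds.add (tendsto_div_sqrt_natCast_atTop √2)

end InnerProductSpace

theorem hilbert_rendezvous_eq_sqrt_two_general {𝕜 H : Type*} [RCLike 𝕜]
    [NormedAddCommGroup H] [InnerProductSpace 𝕜 H]
    [MeasurableSpace H] [BorelSpace H] (hinf : ¬ FiniteDimensional 𝕜 H) :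
    chebM (fun x y : H => edist x y) (Metric.sphere (0 : H) 1) (Metric.sphere (0 : H) 1)
        = ENNReal.ofReal (Real.sqrt 2) ∧
    chebMDual (fun x y : H => edist x y) (Metric.sphere (0 : H) 1) (Metric.sphere (0 : H) 1)
        = ENNReal.ofReal (Real.sqrt 2) ∧
    qLow (fun x y : H => edist x y) (Metric.sphere (0 : H) 1) (Metric.sphere (0 : H) 1)
        = ENNReal.ofReal (Real.sqrt 2) ∧
    qUp (fun x y : H => edist x y) (Metric.sphere (0 : H) 1) (Metric.sphere (0 : H) 1)
        = ENNReal.ofReal (Real.sqrt 2) := by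
  have hk : ∀ x y : H, edist x y = edist y x := edist_comm
  have hkm : ∀ x : H, Measurable (edist x) := fun x =>
    (continuous_const.edist continuous_id).measurable
  have hM := ofReal_sqrt_two_le_chebM_sphere 𝕜 hinf
  have hMDual := chebMDual_sphere_le_ofReal_sqrt_two 𝕜 hinf
  have hMqLow := chebM_le_qLow (fun x y : H => edist x y) (Metric.sphere 0 1) (Metric.sphere 0 1)
  have hqLowMDual := qLow_le_chebMDual hk hkm (Metric.sphere 0 1) (Metric.sphere 0 1)
  have hMqUp := chebM_le_qUp hk hkm (Metric.sphere 0 1) (Metric.sphere 0 1)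
  have hqUpMDual :=
    qUp_le_chebMDual (fun x y : H => edist x y) (Metric.sphere 0 1) (Metric.sphere 0 1)
  refine ⟨?_, ?_, ?_, ?_⟩ <;> apply le_antisymm <;> order

/-- Wolf, Lin: For an infinite dimensional Hilbert space `H` over ℝ or
ℂ, with the kernel `k(x,y) = ‖x-y‖` on the unit sphere `S_H`, the rendezvous and
average intervals of `S_H` both reduce to the single point `√2`:
`𝓐(H) = 𝓡(H) = {√2}`. -/
theorem hilbert_rendezvous_eq_sqrt_two {𝕜 H : Type*} [RCLike 𝕜]
    [NormedAddCommGroup H] [InnerProductSpace 𝕜 H] [CompleteSpace H]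
    [MeasurableSpace H] [BorelSpace H] (hinf : ¬ FiniteDimensional 𝕜 H) :
    chebM (fun x y : H => edist x y) (Metric.sphere (0 : H) 1) (Metric.sphere (0 : H) 1)
        = ENNReal.ofReal (Real.sqrt 2) ∧
    chebMDual (fun x y : H => edist x y) (Metric.sphere (0 : H) 1) (Metric.sphere (0 : H) 1)
        = ENNReal.ofReal (Real.sqrt 2) ∧
    qLow (fun x y : H => edist x y) (Metric.sphere (0 : H) 1) (Metric.sphere (0 : H) 1)
        = ENNReal.ofReal (Real.sqrt 2) ∧
    qUp (fun x y : H => edist x y) (Metric.sphere (0 : H) 1) (Metric.sphere (0 : H) 1)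
        = ENNReal.ofReal (Real.sqrt 2) :=
  hilbert_rendezvous_eq_sqrt_two_general hinf
end

section
/- (E. and G. Szekeres) Let X be a real normed space and let K ⊆ X be a nonempty compact convex set, regarded with the kernel k(x,y) := ‖x−y‖. Let ρ(K) := inf_{c∈K} sup_{x∈K} ‖x−c‖ be the Chebyshev out-radius of K (the radius of the smallest closed ball with centre in K containing K). Then the rendezvous interval of K reduces to the single point ρ(K): M(K) = M̄(K) = ρ(K). -/
open MeasureTheory ENNReal
open scoped BigOperators

open Rendezvous

/-!
For any symmetric kernel, `Mₙ(K) ≤ M̄ₘ(K)` by double counting the distances between an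
`n`-point and an `m`-point configuration, so `M(K) ≤ M̄(K) ≤ M̄₁(K) = ρ(K)`.

For `ρ(K) ≤ M(K)`, fix `s < ρ(K)`. Every `x ∈ K` has some `z ∈ K` with `‖x - z‖ > s`, and by
compactness finitely many `z₁, …, zₘ` suffice. The functions `x ↦ ‖x - zᵢ‖` are convex, so
Sion's minimax theorem on `K` times the standard simplex gives weights `p` with
`∑ pᵢ ‖x - zᵢ‖ ≥ s` on all of `K`. Rounding `N pᵢ` up to integers `cᵢ` and repeating each `zᵢ`
exactly `cᵢ` times produces configurations whose average distance to every point of `K` exceeds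
any given `r < s`.
-/

open Set

theorem exists_mem_stdSimplex_forall_le_sum {E ι : Type*} [TopologicalSpace E] [AddCommGroup E]
    [Module ℝ E] [IsTopologicalAddGroup E] [ContinuousSMul ℝ E] [Fintype ι] {K : Set E}
    (hne : K.Nonempty) (hK : IsCompact K) (hconv : Convex ℝ K) {f : ι → E → ℝ}
    (hf_cont : ∀ i, ContinuousOn (f i) K) (hf_conv : ∀ i, ConvexOn ℝ K (f i)) {v : ℝ}
    (hv : ∀ x ∈ K, ∃ i, v ≤ f i x) :
    ∃ p ∈ stdSimplex ℝ ι, ∀ x ∈ K, v ≤ ∑ i, p i * f i x := by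
  classical
  obtain ⟨i₀, -⟩ := hv hne.some hne.some_mem
  have hconvex (p : ι → ℝ) (hp : p ∈ stdSimplex ℝ ι) :
      ConvexOn ℝ K fun x => ∑ i, p i * f i x := by
    simpa only [← Finset.sum_fn] using Finset.sum_induction _ (ConvexOn ℝ K)
      (fun _ _ => ConvexOn.add) (convexOn_const 0 hconv) fun i _ => by
        simpa only [smul_eq_mul] using (hf_conv i).smul (hp.1 i)
  have hlinear (x : E) :
      (fun p : ι → ℝ => ∑ i, p i * f i x) = Fintype.linearCombination ℝ fun i => f i x := by
    ext p
    simp [Fintype.linearCombination_apply]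
  obtain ⟨a, ha, p, hp, hsaddle⟩ := Sion.exists_isSaddlePointOn
    (f := fun x (p : ι → ℝ) => ∑ i, p i * f i x) hne hconv hK
    (fun p _ => (continuousOn_finsetSum _ fun i _ =>
      (hf_cont i).const_smul (p i)).lowerSemicontinuousOn)
    (fun p hp => (hconvex p hp).quasiconvexOn) (convex_stdSimplex ℝ ι)
    ⟨_, single_mem_stdSimplex ℝ i₀⟩ (isCompact_stdSimplex ℝ ι)
    (fun x _ => by
      rw [hlinear]
      exact (LinearMap.continuous_of_finiteDimensional _).continuousOn.upperSemicontinuousOn)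
    (fun x _ => by
      rw [hlinear]
      exact (LinearMap.concaveOn _ (convex_stdSimplex ℝ ι)).quasiconcaveOn)
  refine ⟨p, hp, fun x hx => ?_⟩
  obtain ⟨i, hi⟩ := hv a ha
  calc v ≤ f i a := hi
    _ = ∑ j, (Pi.single i (1 : ℝ) : ι → ℝ) j * f j a := by simp [Pi.single_apply]
    _ ≤ ∑ j, p j * f j x := hsaddle x hx (Pi.single i 1) (single_mem_stdSimplex ℝ i)

theorem exists_nat_weights_mul_le_sum {ι : Type*} [Fintype ι] {p : ι → ℝ}
    (hp : p ∈ stdSimplex ℝ ι) {r v : ℝ} (hrv : r < v) :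
    ∃ c : ι → ℕ, 0 < ∑ i, c i ∧ ∀ d : ι → ℝ, 0 ≤ d → v ≤ ∑ i, p i * d i →
      ((∑ i, c i : ℕ) : ℝ) * r ≤ ∑ i, c i * d i := by
  -- `N` is chosen so that `N (v - r)` absorbs the rounding error `|ι| |r|`.
  obtain ⟨N₀, hN₀⟩ := exists_nat_ge (Fintype.card ι * |r| / (v - r))
  set N : ℕ := N₀ + 1
  have hN : Fintype.card ι * |r| ≤ N * (v - r) := by
    rw [div_le_iff₀ (sub_pos.2 hrv)] at hN₀
    have : (N₀ : ℝ) ≤ N := by simp [N]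
    nlinarith
  set c : ι → ℕ := fun i => ⌈p i * N⌉₊
  have hc_ge (i : ι) : p i * N ≤ c i := Nat.le_ceil _
  have hc_le (i : ι) : (c i : ℝ) ≤ p i * N + 1 :=
    (Nat.ceil_lt_add_one (mul_nonneg (hp.1 i) N.cast_nonneg)).le
  have hN_le : (N : ℝ) ≤ ∑ i, (c i : ℝ) :=
    calc (N : ℝ) = ∑ i, p i * N := by rw [← Finset.sum_mul, hp.2, one_mul]
      _ ≤ ∑ i, (c i : ℝ) := Finset.sum_le_sum fun i _ => hc_ge i
  have hle_N : ∑ i, (c i : ℝ) ≤ N + Fintype.card ι :=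
    calc ∑ i, (c i : ℝ) ≤ ∑ i, (p i * N + 1) := Finset.sum_le_sum fun i _ => hc_le i
      _ = N + Fintype.card ι := by simp [Finset.sum_add_distrib, ← Finset.sum_mul, hp.2]
  refine ⟨c, ?_, fun d hd hpd => ?_⟩
  · have : (0 : ℝ) < ∑ i, (c i : ℝ) := lt_of_lt_of_le (by positivity) hN_le
    exact_mod_cast this
  · have hNv : (N : ℝ) * v ≤ ∑ i, c i * d i :=
      calc (N : ℝ) * v ≤ N * ∑ i, p i * d i := by gcongr
        _ = ∑ i, p i * N * d i := by
          rw [Finset.mul_sum]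
          exact Finset.sum_congr rfl fun i _ => by ring
        _ ≤ ∑ i, c i * d i := by
          gcongr with i
          · exact hd i
          · exact hc_ge i
    push_cast
    nlinarith [le_abs_self r, neg_abs_le r]

theorem exists_fin_tuple_sum_comp_eq {ι α : Type*} [Fintype ι] (c : ι → ℕ) (z : ι → α) :
    ∃ w : Fin (∑ i, c i) → α, ∀ {M : Type*} [AddCommMonoid M] (g : α → M),
      ∑ j, g (w j) = ∑ i, c i • g (z i) := by
  let e : (Σ i, Fin (c i)) ≃ Fin (∑ i, c i) := Fintype.equivFinOfCardEq (by simp)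
  refine ⟨fun j => z (e.symm j).1, fun g => ?_⟩
  rw [e.symm.sum_comp (fun t => g (z t.1)), Fintype.sum_sigma]
  simp

namespace Rendezvous

section Kernel

variable {X : Type*} (k : X → X → ℝ≥0∞) (H L : Set X)

theorem chebMn_le_chebMnDual (hk : ∀ x y, k x y = k y x) {n m : ℕ} (hn : n ≠ 0)
    (hm : m ≠ 0) : chebMn k n H L ≤ chebMnDual k m L H := by
  have hn' : (n : ℝ≥0∞) ≠ 0 := by exact_mod_cast hn
  have hm' : (m : ℝ≥0∞) ≠ 0 := by exact_mod_cast hm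
  refine iSup_le fun w => le_iInf fun v => ?_
  set c := ⨅ x : L, (∑ j, k x (w j)) / (n : ℝ≥0∞)
  set R := ⨆ x : H, (∑ i, k x (v i)) / (m : ℝ≥0∞)
  have hc (i : Fin m) : c * n ≤ ∑ j, k (v i) (w j) :=
    (ENNReal.le_div_iff_mul_le (.inl hn') (.inl (natCast_ne_top n))).1 (iInf_le _ (v i))
  have hR (j : Fin n) : ∑ i, k (w j) (v i) ≤ R * m :=
    (ENNReal.div_le_iff hm' (natCast_ne_top m)).1
      (le_iSup (fun x : H => (∑ i, k x (v i)) / (m : ℝ≥0∞)) (w j))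
  refine (ENNReal.mul_le_mul_iff_left (c := (n : ℝ≥0∞) * m) (by simp [hn', hm'])
    (by finiteness)).1 ?_
  calc c * (n * m)
      = ∑ _i : Fin m, c * n := by
        rw [Finset.sum_const, Finset.card_univ, Fintype.card_fin, nsmul_eq_mul]; ring
    _ ≤ ∑ i, ∑ j, k (v i) (w j) := Finset.sum_le_sum fun i _ => hc i
    _ = ∑ j, ∑ i, k (w j) (v i) := by rw [Finset.sum_comm]; simp only [hk]
    _ ≤ ∑ _j : Fin n, R * m := Finset.sum_le_sum fun j _ => hR j
    _ = R * (n * m) := by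
        rw [Finset.sum_const, Finset.card_univ, Fintype.card_fin, nsmul_eq_mul]; ring

theorem chebM_le_chebMDual (hk : ∀ x y, k x y = k y x) : chebM k H L ≤ chebMDual k L H :=
  iSup₂_le fun _n hn => le_iInf₂ fun _m hm =>
    chebMn_le_chebMnDual k H L hk (Nat.one_le_iff_ne_zero.1 hn) (Nat.one_le_iff_ne_zero.1 hm)

theorem chebMnDual_one : chebMnDual k 1 H L = ⨅ c ∈ H, ⨆ x ∈ L, k x c := by
  simp only [chebMnDual, Fin.sum_univ_one, Nat.cast_one, div_one, iSup_subtype', iInf_subtype']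
  exact le_antisymm (le_iInf fun c => iInf_le_of_le (fun _ => c) le_rfl)
    (le_iInf fun w => iInf_le_of_le (w 0) le_rfl)

theorem chebMDual_le_iInf_iSup : chebMDual k H L ≤ ⨅ c ∈ H, ⨆ x ∈ L, k x c :=
  (iInf₂_le 1 le_rfl).trans_eq (chebMnDual_one k H L)

theorem le_chebM_of_mul_le_sum {n : ℕ} (hn : n ≠ 0) (w : Fin n → H) {a : ℝ≥0∞}
    (h : ∀ x ∈ L, n * a ≤ ∑ j, k x (w j)) : a ≤ chebM k H L := by
  refine le_iSup₂_of_le n (Nat.one_le_iff_ne_zero.2 hn) (le_iSup_of_le w (le_iInf fun x => ?_))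
  rw [ENNReal.le_div_iff_mul_le (.inl (by exact_mod_cast hn)) (.inl (natCast_ne_top n)),
    mul_comm]
  exact h x x.2

end Kernel

section Normed

variable {E : Type*} [SeminormedAddCommGroup E] [NormedSpace ℝ E] {K : Set E}

theorem exists_fin_tuple_mul_le_sum_dist (hne : K.Nonempty) (hK : IsCompact K)
    (hconv : Convex ℝ K) {r s : ℝ} (hrs : r < s) (hfar : ∀ x ∈ K, ∃ z ∈ K, s < dist x z) :
    ∃ n ≠ 0, ∃ w : Fin n → K, ∀ x ∈ K, n * r ≤ ∑ j, dist x (w j : E) := by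
  obtain ⟨t, ht⟩ := hK.elim_finite_subcover (fun z : K => {x | s < dist x z})
    (fun _ => isOpen_lt continuous_const (continuous_id.dist continuous_const))
    (fun x hx => by
      obtain ⟨z, hz, hxz⟩ := hfar x hx
      exact mem_iUnion.2 ⟨⟨z, hz⟩, hxz⟩)
  have hcover : ∀ x ∈ K, ∃ z : t, s ≤ dist x (z : K) := fun x hx => by
    obtain ⟨z, hz, hxz⟩ := mem_iUnion₂.1 (ht hx)
    exact ⟨⟨z, hz⟩, hxz.le⟩
  obtain ⟨p, hp, hpK⟩ := exists_mem_stdSimplex_forall_le_sum hne hK hconv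
    (f := fun (z : t) x => dist x (z : K))
    (fun _ => (continuous_id.dist continuous_const).continuousOn)
    (fun _ => convexOn_dist _ hconv) hcover
  obtain ⟨c, hc0, hc⟩ := exists_nat_weights_mul_le_sum hp hrs
  obtain ⟨w, hw⟩ := exists_fin_tuple_sum_comp_eq c fun z : t => (z : K)
  refine ⟨_, hc0.ne', w, fun x hx => ?_⟩
  rw [hw fun z : K => dist x (z : E)]
  simpa only [nsmul_eq_mul] using hc _ (fun _ => dist_nonneg) (hpK x hx)

theorem iInf_iSup_edist_le_chebM (hne : K.Nonempty) (hK : IsCompact K) (hconv : Convex ℝ K) :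
    ⨅ c ∈ K, ⨆ x ∈ K, edist x c ≤ chebM (fun x y : E => edist x y) K K := by
  refine le_of_forall_lt_imp_le_of_dense fun a ha => ?_
  obtain ⟨r, -, har, hr⟩ := ENNReal.lt_iff_exists_real_btwn.1 ha
  obtain ⟨s, -, hrs, hs⟩ := ENNReal.lt_iff_exists_real_btwn.1 hr
  have hfar : ∀ x ∈ K, ∃ z ∈ K, s < dist x z := fun x hx => by
    obtain ⟨z, hz, hsz⟩ := lt_biSup_iff.1 (hs.trans_le (biInf_le _ hx))
    rw [edist_comm, edist_dist, ENNReal.ofReal_lt_ofReal_iff'] at hsz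
    exact ⟨z, hz, hsz.1⟩
  obtain ⟨n, hn, w, hw⟩ := exists_fin_tuple_mul_le_sum_dist hne hK hconv
    (ENNReal.ofReal_lt_ofReal_iff'.1 hrs).1 hfar
  refine har.le.trans (le_chebM_of_mul_le_sum _ K K hn w fun x hx => ?_)
  calc (n : ℝ≥0∞) * ENNReal.ofReal r = ENNReal.ofReal (n * r) := by
        rw [ENNReal.ofReal_mul n.cast_nonneg, ENNReal.ofReal_natCast]
    _ ≤ ENNReal.ofReal (∑ j, dist x (w j : E)) := ENNReal.ofReal_le_ofReal (hw x hx)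
    _ = ∑ j, edist x (w j : E) := by
        rw [ENNReal.ofReal_sum_of_nonneg fun _ _ => dist_nonneg]
        simp only [edist_dist]

end Normed

end Rendezvous

/-- E. and G. Szekeres: For a nonempty compact convex subset `K` of a
real normed space, with the kernel `k(x,y) = ‖x-y‖`, the rendezvous interval of `K`
reduces to the single point `ρ(K) = inf_{c ∈ K} sup_{x ∈ K} ‖x-c‖`, the Chebyshev
out-radius of `K`. -/
theorem szekeres_rendezvous_eq_chebyshevRadius {X : Type*} [NormedAddCommGroup X]
    [NormedSpace ℝ X] (K : Set X) (hne : K.Nonempty) (hcpt : IsCompact K)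
    (hconv : Convex ℝ K) :
    chebM (fun x y : X => edist x y) K K = (⨅ c ∈ K, ⨆ x ∈ K, edist x c) ∧
    chebMDual (fun x y : X => edist x y) K K = (⨅ c ∈ K, ⨆ x ∈ K, edist x c) := by
  have hle : chebM (fun x y : X => edist x y) K K ≤ chebMDual (fun x y : X => edist x y) K K :=
    chebM_le_chebMDual _ K K edist_comm
  have hup := chebMDual_le_iInf_iSup (fun x y : X => edist x y) K K
  have hlow := iInf_iSup_edist_le_chebM hne hcpt hconv
  exact ⟨le_antisymm (hle.trans hup) hlow, le_antisymm hup (hlow.trans hle)⟩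
end
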